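/- A conditional expectation preserving system (E, T, S, e) is conditionally weak mixing if and only if (1/n)·∑_{k=0}^{n-1} |T((S^k f)·g) − Tf·Tg| → 0 in order as n → ∞ for all f, g in the ideal E_e generated by e. -/

import Mathlib

open Finset

section Defs

variable {E : Type*} [ConditionallyCompleteLattice E] [AddCommGroup E] [Module ℝ E]
  [CovariantClass E E (· + ·) (· ≤ ·)]

/-- Order convergence of a sequence: there is a sequence `u ↓ 0` dominating the tails. -/
def OrderConvergesTo (f : ℕ → E) (x : E) : Prop :=
  ∃ u : ℕ → E, Antitone u ∧ IsGLB (Set.range u) (0 : E) ∧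
    ∀ m : ℕ, ∃ N : ℕ, ∀ n ≥ N, |f n - x| ≤ u m

/-- `p` is a component of `e`. -/
def IsComponent (e p : E) : Prop := 0 ≤ p ∧ p ≤ e ∧ p ⊓ (e - p) = 0

/-- A sequence of components is of density zero if its Cesàro means order converge to `0`. -/
def DensityZero (p : ℕ → E) : Prop :=
  OrderConvergesTo (fun n => (n : ℝ)⁻¹ • ∑ k ∈ Finset.range n, p k) (0 : E)

/-- The band projection (onto the band generated by `p`) applied to a positive element `f`. -/
noncomputable def bandProj (p f : E) : E :=
  sSup (Set.range fun n : ℕ => f ⊓ (n : ℝ) • p)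

end Defs

section Systems

variable (E : Type*) [ConditionallyCompleteLattice E] [AddCommGroup E] [Module ℝ E]
  [CovariantClass E E (· + ·) (· ≤ ·)]

/-- The data of a conditional expectation preserving system, without the
intertwining identity `T S = T`: a Dedekind complete Riesz space with weak order unit `e`,
the `f`-algebra multiplication of `E_e` (with unit `e`), a strictly-positive-free
conditional expectation operator `T` with `T e = e`, and a Riesz homomorphism `S`
with `S e = e`. -/
structure PreCEPS where
  e : E
  e_pos : 0 < e
  weakUnit : ∀ x : E, e ⊓ |x| = 0 → x = 0
  /-- the `f`-algebra multiplication (of the ideal generated by `e`) -/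
  mul : E →ₗ[ℝ] E →ₗ[ℝ] E
  mul_comm' : ∀ x y, mul x y = mul y x
  mul_pos' : ∀ x y, 0 ≤ x → 0 ≤ y → 0 ≤ mul x y
  one_mul' : ∀ x, mul e x = x
  finf' : ∀ x y z, x ⊓ y = 0 → 0 ≤ z → (mul x z) ⊓ y = 0
  /-- the conditional expectation operator -/
  T : E →ₗ[ℝ] E
  T_pos : ∀ x, 0 ≤ x → 0 ≤ T x
  T_proj : ∀ x, T (T x) = T x
  T_e : T e = e
  T_oc : ∀ (s : Set E) (x : E), s.Nonempty → DirectedOn (· ≤ ·) s → IsLUB s x →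
    IsLUB (T '' s) (T x)
  T_range_closed : ∀ (s : Set E) (x : E), (∀ y ∈ s, T y = y) → IsLUB s x → T x = x
  /-- the Riesz homomorphism -/
  S : E →ₗ[ℝ] E
  S_sup : ∀ x y, S (x ⊔ y) = S x ⊔ S y
  S_e : S e = e

/-- A conditional expectation preserving system. -/
structure CEPS extends PreCEPS E where
  TS : ∀ x, T (S x) = T x

variable {E}

/-- Strict positivity of the conditional expectation operator of a system. -/
def CEPS.StrictPos (A : CEPS E) : Prop := ∀ x : E, 0 ≤ x → A.T x = 0 → x = 0

/-- Ergodicity, characterised by Cesàro convergence of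
`T((S^k p)·q)` to `Tp·Tq` for all components `p, q` of `e`. -/
def CEPS.Ergodic (A : CEPS E) : Prop :=
  ∀ p q : E, IsComponent A.e p → IsComponent A.e q →
    OrderConvergesTo
      (fun n => (n : ℝ)⁻¹ • ∑ k ∈ Finset.range n, A.T (A.mul ((A.S ^ k) p) q))
      (A.mul (A.T p) (A.T q))

/-- Conditional weak mixing. -/
def CEPS.WeakMixing (A : CEPS E) : Prop :=
  ∀ p q : E, IsComponent A.e p → IsComponent A.e q →
    OrderConvergesTo
      (fun n => (n : ℝ)⁻¹ • ∑ k ∈ Finset.range n,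
        |A.T (A.mul ((A.S ^ k) p) q) - A.mul (A.T p) (A.T q)|) (0 : E)

end Systems

section Tensor

variable {E F G : Type*}
  [ConditionallyCompleteLattice E] [AddCommGroup E] [Module ℝ E]
  [CovariantClass E E (· + ·) (· ≤ ·)]
  [ConditionallyCompleteLattice F] [AddCommGroup F] [Module ℝ F]
  [CovariantClass F F (· + ·) (· ≤ ·)]
  [ConditionallyCompleteLattice G] [AddCommGroup G] [Module ℝ G]
  [CovariantClass G G (· + ·) (· ≤ ·)]

/-- A realisation of the Dedekind completion of the Fremlin tensor product of the
underlying spaces of two conditional expectation preserving systems, carrying the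
pre-system structure (Grobler's tensor product conditional expectation and the tensor
product Riesz homomorphism), but without the intertwining identity for the product. -/
structure TensorPreCEPS (A : CEPS E) (B : CEPS F) (G : Type*)
    [ConditionallyCompleteLattice G] [AddCommGroup G] [Module ℝ G]
    [CovariantClass G G (· + ·) (· ≤ ·)] where
  sys : PreCEPS G
  tmul : E →ₗ[ℝ] F →ₗ[ℝ] G
  tmul_pos : ∀ x y, 0 ≤ x → 0 ≤ y → 0 ≤ tmul x y
  e_def : sys.e = tmul A.e B.e
  T_tmul : ∀ x y, sys.T (tmul x y) = tmul (A.T x) (B.T y)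
  S_tmul : ∀ x y, sys.S (tmul x y) = tmul (A.S x) (B.S y)
  mul_tmul : ∀ x y x' y',
    sys.mul (tmul x y) (tmul x' y') = tmul (A.mul x x') (B.mul y y')
  comp_dense : ∀ u : G, IsComponent sys.e u →
    IsLUB {w : G | ∃ p q, IsComponent A.e p ∧ IsComponent B.e q ∧
      tmul p q ≤ u ∧ w = tmul p q} u
  tmul_oc_left : ∀ (x : ℕ → E) (a : E) (y : F), 0 ≤ y →
    OrderConvergesTo x a → OrderConvergesTo (fun n => tmul (x n) y) (tmul a y)
  tmul_oc_right : ∀ (x : E) (y : ℕ → F) (b : F), 0 ≤ x →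
    OrderConvergesTo y b → OrderConvergesTo (fun n => tmul x (y n)) (tmul x b)

/-- As `TensorPreCEPS`, but where the tensor product system is a full conditional
expectation preserving system. -/
structure TensorCEPS (A : CEPS E) (B : CEPS F) (G : Type*)
    [ConditionallyCompleteLattice G] [AddCommGroup G] [Module ℝ G]
    [CovariantClass G G (· + ·) (· ≤ ·)] where
  sys : CEPS G
  tmul : E →ₗ[ℝ] F →ₗ[ℝ] G
  tmul_pos : ∀ x y, 0 ≤ x → 0 ≤ y → 0 ≤ tmul x y
  e_def : sys.e = tmul A.e B.e
  T_tmul : ∀ x y, sys.T (tmul x y) = tmul (A.T x) (B.T y)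
  S_tmul : ∀ x y, sys.S (tmul x y) = tmul (A.S x) (B.S y)
  mul_tmul : ∀ x y x' y',
    sys.mul (tmul x y) (tmul x' y') = tmul (A.mul x x') (B.mul y y')
  comp_dense : ∀ u : G, IsComponent sys.e u →
    IsLUB {w : G | ∃ p q, IsComponent A.e p ∧ IsComponent B.e q ∧
      tmul p q ≤ u ∧ w = tmul p q} u
  tmul_oc_left : ∀ (x : ℕ → E) (a : E) (y : F), 0 ≤ y →
    OrderConvergesTo x a → OrderConvergesTo (fun n => tmul (x n) y) (tmul a y)
  tmul_oc_right : ∀ (x : E) (y : ℕ → F) (b : F), 0 ≤ x →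
    OrderConvergesTo y b → OrderConvergesTo (fun n => tmul x (y n)) (tmul x b)

end Tensor

/-!
The correlation `Φₖ(f, g) = T((Sᵏ f)·g) − Tf·Tg` is bilinear in `(f, g)`. Splitting `f = f⁺ − f⁻`
and `g = g⁺ − g⁻` reduces the claim to `0 ≤ f ≤ a e` and `0 ≤ g ≤ b e`. By Freudenthal's spectral
theorem, `f` and `g` are approximated from below, up to `ε e`, by positive combinations `f'`, `g'`
of components of `e`, for which weak mixing gives the Cesàro convergence of `|Φₖ(f', g')|`; and
`|Φₖ(f, g)| ≤ |Φₖ(f', g')| + 2ε(a + b) e` for every `k`. So the limit superior of the Cesàro means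
of `|Φₖ(f, g)|` lies below `2ε(a + b) e` for every `ε > 0`, and vanishes because the Dedekind
complete space `E` is Archimedean.
-/

theorem inf_eq_zero_of_le {E : Type*} [Lattice E] [Zero E] {a b a' b' : E} (ha' : 0 ≤ a')
    (hb' : 0 ≤ b') (ha : a' ≤ a) (hb : b' ≤ b) (h : a ⊓ b = 0) : a' ⊓ b' = 0 :=
  le_antisymm (h ▸ inf_le_inf ha hb) (le_inf ha' hb')

theorem abs_smul_le_smul_abs {E : Type*} [Lattice E] [AddCommGroup E] [Module ℝ E]
    [PosSMulMono ℝ E] {r : ℝ} (hr : 0 ≤ r) (x : E) : |r • x| ≤ r • |x| :=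
  abs_le'.2 ⟨smul_le_smul_of_nonneg_left (le_abs_self x) hr,
    by rw [← smul_neg]; exact smul_le_smul_of_nonneg_left (neg_le_abs x) hr⟩

theorem abs_apply_le_apply_abs {E F G : Type*} [Lattice E] [AddCommGroup E] [Lattice F]
    [AddCommGroup F] [FunLike G E F] [AddMonoidHomClass G E F] {L : G} (hL : Monotone L)
    (x : E) : |L x| ≤ L |x| :=
  abs_le'.2 ⟨hL (le_abs_self x), by rw [← map_neg]; exact hL (neg_le_abs x)⟩

section LatticeOrderedGroup

variable {E : Type*} [Lattice E] [AddCommGroup E] [CovariantClass E E (· + ·) (· ≤ ·)]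

instance : IsOrderedAddMonoid E where
  add_le_add_left _ _ h c := add_le_add_left h c

theorem abs_sub_le_abs_add_abs (a b : E) : |a - b| ≤ |a| + |b| := by
  simpa [sub_eq_add_neg] using abs_add_le a (-b)

theorem posPart_le_abs (a : E) : a⁺ ≤ |a| := sup_le (le_abs_self a) (abs_nonneg a)

theorem negPart_le_abs (a : E) : a⁻ ≤ |a| := sup_le (neg_le_abs a) (abs_nonneg a)

theorem Finset.abs_sum_le_sum_abs_of_lattice {ι : Type*} (s : Finset ι) (f : ι → E) :
    |∑ i ∈ s, f i| ≤ ∑ i ∈ s, |f i| := by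
  classical
  induction s using Finset.induction with
  | empty => simp
  | insert i s hi ih =>
    rw [sum_insert hi, sum_insert hi]
    exact (abs_add_le _ _).trans (add_le_add_right ih _)

theorem inf_add_le_inf_add_inf {a b c : E} (ha : 0 ≤ a) (hb : 0 ≤ b) (hc : 0 ≤ c) :
    a ⊓ (b + c) ≤ a ⊓ b + a ⊓ c := by
  rw [add_inf, inf_add, inf_add]
  exact le_inf (le_inf (inf_le_left.trans (le_add_of_nonneg_right ha))
    (inf_le_left.trans (le_add_of_nonneg_left hb)))
    (le_inf (inf_le_left.trans (le_add_of_nonneg_right hc)) inf_le_right)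

theorem nsmul_inf_eq_zero {a c : E} (ha : 0 ≤ a) (hc : 0 ≤ c) (h : a ⊓ c = 0) (n : ℕ) :
    (n • a) ⊓ c = 0 := by
  induction n with
  | zero => simp [hc]
  | succ n ih =>
    refine le_antisymm ?_ (le_inf (nsmul_nonneg ha _) hc)
    calc (n.succ • a) ⊓ c = c ⊓ (n • a + a) := by rw [succ_nsmul, inf_comm]
      _ ≤ c ⊓ (n • a) + c ⊓ a := inf_add_le_inf_add_inf hc (nsmul_nonneg ha _) ha
      _ = 0 := by rw [inf_comm, ih, inf_comm, h, add_zero]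

theorem eq_zero_of_isLUB_of_inf_eq_zero {s : Set E} {p t : E} (hs : IsLUB s p)
    (h : ∀ x ∈ s, x ⊓ t = 0) (ht : 0 ≤ t) (htp : t ≤ p) : t = 0 := by
  have hle : ∀ x ∈ s, x ≤ p - t := fun x hx => by
    rw [le_sub_iff_add_le, ← inf_add_sup, h x hx, zero_add]
    exact sup_le (hs.1 hx) htp
  exact le_antisymm (by simpa using sub_nonneg.2 (hs.2 hle)) ht

theorem LinearMap.abs_apply₂_le_posPart_negPart {R M N : Type*} [CommSemiring R]
    [Lattice M] [AddCommGroup M] [AddLeftMono M] [Module R M]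
    [Lattice N] [AddCommGroup N] [AddLeftMono N] [Module R N] [Module R E]
    (B : M →ₗ[R] N →ₗ[R] E) (x : M) (y : N) :
    |B x y| ≤ |B x⁺ y⁺| + |B x⁻ y⁺| + |B x⁺ y⁻| + |B x⁻ y⁻| := by
  conv_lhs => rw [← posPart_sub_negPart x, ← posPart_sub_negPart y]
  simp only [map_sub, LinearMap.sub_apply]
  calc _ ≤ |B x⁺ y⁺ - B x⁻ y⁺| + |B x⁺ y⁻ - B x⁻ y⁻| := abs_sub_le_abs_add_abs _ _
    _ ≤ |B x⁺ y⁺| + |B x⁻ y⁺| + (|B x⁺ y⁻| + |B x⁻ y⁻|) :=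
      add_le_add (abs_sub_le_abs_add_abs _ _) (abs_sub_le_abs_add_abs _ _)
    _ = _ := (add_assoc _ _ _).symm

theorem LinearMap.abs_apply₂_sum_smul_le [Module ℝ E] [PosSMulMono ℝ E] {M N ι κ : Type*}
    [AddCommGroup M] [Module ℝ M] [AddCommGroup N] [Module ℝ N] (B : M →ₗ[ℝ] N →ₗ[ℝ] E)
    (s : Finset ι) (t : Finset κ) {c : ι → ℝ} {d : κ → ℝ} (hc : ∀ i, 0 ≤ c i)
    (hd : ∀ j, 0 ≤ d j) (x : ι → M) (y : κ → N) :
    |B (∑ i ∈ s, c i • x i) (∑ j ∈ t, d j • y j)| ≤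
      ∑ i ∈ s, ∑ j ∈ t, (c i * d j) • |B (x i) (y j)| := by
  have h : B (∑ i ∈ s, c i • x i) (∑ j ∈ t, d j • y j) =
      ∑ i ∈ s, ∑ j ∈ t, (c i * d j) • B (x i) (y j) := by
    simp only [map_sum, map_smul, LinearMap.sum_apply, LinearMap.smul_apply, smul_sum, smul_smul]
    rw [sum_comm]
    simp only [mul_comm]
  rw [h]
  exact (abs_sum_le_sum_abs_of_lattice _ _).trans (sum_le_sum fun i _ =>
    (abs_sum_le_sum_abs_of_lattice _ _).trans (sum_le_sum fun j _ =>
      abs_smul_le_smul_abs (mul_nonneg (hc i) (hd j)) _))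

end LatticeOrderedGroup

section DedekindComplete

variable {E : Type*} [ConditionallyCompleteLattice E] [AddCommGroup E]
  [CovariantClass E E (· + ·) (· ≤ ·)]

theorem nonpos_of_forall_nsmul_le {b W : E} (h : ∀ n : ℕ, n • b ≤ W) : b ≤ 0 := by
  have hbdd : BddAbove (Set.range fun n : ℕ => n • b) := ⟨W, by rintro _ ⟨n, rfl⟩; exact h n⟩
  have hs : sSup (Set.range fun n : ℕ => n • b) ≤ sSup (Set.range fun n : ℕ => n • b) - b :=
    csSup_le (Set.range_nonempty _) <| by
      rintro _ ⟨n, rfl⟩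
      exact le_sub_iff_add_le.2 (by simpa [succ_nsmul] using le_csSup hbdd ⟨n + 1, rfl⟩)
  simpa using sub_nonneg.2 hs

theorem IsComponent.sub {e p q : E} (hp : IsComponent e p) (hq : IsComponent e q) (hqp : q ≤ p) :
    IsComponent e (p - q) := by
  obtain ⟨hp0, hpe, hpc⟩ := hp
  obtain ⟨hq0, -, hqc⟩ := hq
  have hpq : 0 ≤ p - q := sub_nonneg.2 hqp
  refine ⟨hpq, (sub_le_self _ hq0).trans hpe, le_antisymm ?_ (le_inf hpq (by
    rw [sub_sub_eq_add_sub]; exact sub_nonneg.2 (hpe.trans (le_add_of_nonneg_right hq0))))⟩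
  have h₁ : (p - q) ⊓ (e - p) = 0 :=
    inf_eq_zero_of_le hpq (sub_nonneg.2 hpe) (sub_le_self _ hq0) le_rfl hpc
  have h₂ : (p - q) ⊓ q = 0 :=
    inf_eq_zero_of_le hpq hq0 (sub_le_sub_right hpe q) le_rfl (by rwa [inf_comm] at hqc)
  calc (p - q) ⊓ (e - (p - q)) = (p - q) ⊓ ((e - p) + q) := by abel_nf
    _ ≤ (p - q) ⊓ (e - p) + (p - q) ⊓ q := inf_add_le_inf_add_inf hpq (sub_nonneg.2 hpe) hq0
    _ = 0 := by rw [h₁, h₂, add_zero]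

end DedekindComplete

section OrderedVectorSpace

variable {E : Type*} [ConditionallyCompleteLattice E] [AddCommGroup E] [Module ℝ E]
  [CovariantClass E E (· + ·) (· ≤ ·)] [PosSMulMono ℝ E]

theorem nonpos_of_forall_le_smul {b W : E} (h : ∀ ε : ℝ, 0 < ε → b ≤ ε • W) : b ≤ 0 := by
  refine nonpos_of_forall_nsmul_le (W := W ⊔ 0) fun n => ?_
  rcases n.eq_zero_or_pos with rfl | hn
  · simp
  · have hn' : (0 : ℝ) < n := by exact_mod_cast hn
    calc n • b = (n : ℝ) • b := (Nat.cast_smul_eq_nsmul ℝ n b).symm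
      _ ≤ (n : ℝ) • ((n : ℝ)⁻¹ • W) := smul_le_smul_of_nonneg_left (h _ (inv_pos.2 hn')) hn'.le
      _ ≤ W ⊔ 0 := by rw [smul_inv_smul₀ hn'.ne']; exact le_sup_left

theorem smul_inf_eq_zero {a c : E} (ha : 0 ≤ a) (hc : 0 ≤ c) (h : a ⊓ c = 0) {r : ℝ}
    (hr : 0 ≤ r) : (r • a) ⊓ c = 0 := by
  refine inf_eq_zero_of_le (smul_nonneg hr ha) hc ((smul_le_smul_of_nonneg_right
    (Nat.le_ceil r) ha).trans_eq (Nat.cast_smul_eq_nsmul ℝ _ _)) le_rfl ?_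
  exact nsmul_inf_eq_zero ha hc h ⌈r⌉₊

end OrderedVectorSpace

section BandProjection

variable {E : Type*} [ConditionallyCompleteLattice E] [AddCommGroup E] [Module ℝ E]

theorem isLUB_bandProj (p f : E) :
    IsLUB (Set.range fun n : ℕ => f ⊓ (n : ℝ) • p) (bandProj p f) :=
  isLUB_csSup (Set.range_nonempty _) ⟨f, by rintro _ ⟨n, rfl⟩; exact inf_le_left⟩

theorem bandProj_le (p f : E) : bandProj p f ≤ f :=
  (isLUB_bandProj p f).2 (by rintro _ ⟨n, rfl⟩; exact inf_le_left)

theorem bandProj_nonneg {f : E} (hf : 0 ≤ f) (p : E) : 0 ≤ bandProj p f := by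
  simpa [inf_of_le_right hf] using (isLUB_bandProj p f).1 ⟨0, rfl⟩

theorem bandProj_zero_left {f : E} (hf : 0 ≤ f) : bandProj 0 f = 0 := by
  simp [bandProj, inf_of_le_right hf]

variable [PosSMulMono ℝ E]

theorem bandProj_mono_left {p q : E} (hpq : p ≤ q) (f : E) : bandProj p f ≤ bandProj q f :=
  (isLUB_bandProj p f).2 <| by
    rintro _ ⟨n, rfl⟩
    exact (inf_le_inf_left f (smul_le_smul_of_nonneg_left hpq n.cast_nonneg)).trans
      ((isLUB_bandProj q f).1 ⟨n, rfl⟩)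

variable [CovariantClass E E (· + ·) (· ≤ ·)]

/-- Since `f ⊓ n p ≤ bandProj p f`, the element `t = (f - bandProj p f) ⊓ p` lies below
`((f - n p) ⊓ p)⁺`, and `(n + 1) • ((f - n p) ⊓ p) ≤ (f - n p) + n p = f`. -/
theorem sub_bandProj_inf_eq_zero {p : E} (hp : 0 ≤ p) (f : E) : (f - bandProj p f) ⊓ p = 0 := by
  let := AddCommGroup.toDistribLattice E
  set t := (f - bandProj p f) ⊓ p
  have ht : 0 ≤ t := le_inf (sub_nonneg.2 (bandProj_le p f)) hp
  have hnt : ∀ n : ℕ, n • t ≤ f ⊔ 0 := fun n => by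
    set s := (f - (n : ℝ) • p) ⊓ p
    have hts : t ≤ s ⊔ 0 := calc
      t ≤ (f - f ⊓ (n : ℝ) • p) ⊓ p :=
          inf_le_inf_right p (sub_le_sub_left ((isLUB_bandProj p f).1 ⟨n, rfl⟩) f)
      _ = s ⊔ 0 ⊓ p := by rw [sub_inf, sub_self, sup_comm, inf_sup_right]
      _ = s ⊔ 0 := by rw [inf_of_le_left hp]
    have hs : ((n : ℝ) + 1) • s ≤ f := calc
      ((n : ℝ) + 1) • s = (n : ℝ) • s + s := by rw [add_smul, one_smul]
      _ ≤ (n : ℝ) • p + (f - (n : ℝ) • p) :=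
          add_le_add (smul_le_smul_of_nonneg_left inf_le_right n.cast_nonneg) inf_le_left
      _ = f := add_sub_cancel _ _
    calc n • t = (n : ℝ) • t := (Nat.cast_smul_eq_nsmul ℝ n t).symm
      _ ≤ ((n : ℝ) + 1) • t := smul_le_smul_of_nonneg_right (le_add_of_nonneg_right one_pos.le) ht
      _ ≤ ((n : ℝ) + 1) • (s ⊔ 0) := smul_le_smul_of_nonneg_left hts (by positivity)
      _ = ((n : ℝ) + 1) • s ⊔ 0 := by
          have h := (OrderIso.smulRight (by positivity : (0 : ℝ) < n + 1)).map_sup s 0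
          simp only [OrderIso.smulRight_apply, smul_zero] at h
          exact h
      _ ≤ f ⊔ 0 := sup_le_sup_right hs 0
  exact le_antisymm (nonpos_of_forall_nsmul_le hnt) ht

theorem inf_bandProj_eq_zero {p d f : E} (hp : 0 ≤ p) (hd : 0 ≤ d) (h : d ⊓ p = 0)
    (hf : 0 ≤ f) : d ⊓ bandProj p f = 0 := by
  have hP := bandProj_nonneg hf p
  refine eq_zero_of_isLUB_of_inf_eq_zero (isLUB_bandProj p f) ?_ (le_inf hd hP) inf_le_right
  rintro _ ⟨n, rfl⟩
  exact inf_eq_zero_of_le (le_inf hf (smul_nonneg n.cast_nonneg hp)) (le_inf hd hP) inf_le_right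
    inf_le_left (smul_inf_eq_zero hp hd (by rwa [inf_comm]) n.cast_nonneg)

theorem isComponent_bandProj {p f : E} (hp : 0 ≤ p) (hf : 0 ≤ f) :
    IsComponent f (bandProj p f) := by
  refine ⟨bandProj_nonneg hf p, bandProj_le p f, ?_⟩
  rw [inf_comm]
  exact inf_bandProj_eq_zero hp (sub_nonneg.2 (bandProj_le p f)) (sub_bandProj_inf_eq_zero hp f) hf

end BandProjection

section OrderConvergence

variable {E : Type*} [ConditionallyCompleteLattice E] [AddCommGroup E]

theorem OrderConvergesTo.of_abs_le {f g : ℕ → E} (hg : OrderConvergesTo g 0)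
    (hfg : ∀ n, |f n| ≤ g n) : OrderConvergesTo f 0 := by
  obtain ⟨u, hu, hu0, hgu⟩ := hg
  refine ⟨u, hu, hu0, fun m => ?_⟩
  obtain ⟨N, hN⟩ := hgu m
  exact ⟨N, fun n hn => by
    simpa using (hfg n).trans ((le_abs_self _).trans (by simpa using hN n hn))⟩

variable [CovariantClass E E (· + ·) (· ≤ ·)]

theorem orderConvergesTo_zero : OrderConvergesTo (0 : ℕ → E) 0 :=
  ⟨0, antitone_const, by simp, fun _ => ⟨0, fun _ _ => by simp⟩⟩

theorem OrderConvergesTo.abs {f : ℕ → E} (hf : OrderConvergesTo f 0) :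
    OrderConvergesTo (fun n => |f n|) 0 := by
  simpa only [OrderConvergesTo, sub_zero, abs_abs] using hf

theorem isGLB_range_add {u v : ℕ → E} (hu : Antitone u) (hv : Antitone v)
    (hu0 : IsGLB (Set.range u) 0) (hv0 : IsGLB (Set.range v) 0) :
    IsGLB (Set.range (u + v)) 0 := by
  refine ⟨by rintro _ ⟨m, rfl⟩; exact add_nonneg (hu0.1 ⟨m, rfl⟩) (hv0.1 ⟨m, rfl⟩), fun b hb => ?_⟩
  have hbuv : ∀ i j, b - u i ≤ v j := fun i j => sub_le_iff_le_add'.2 <|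
    (hb ⟨max i j, rfl⟩).trans (add_le_add (hu (le_max_left i j)) (hv (le_max_right i j)))
  have hbu : ∀ i, b ≤ u i := fun i =>
    sub_nonpos.1 (hv0.2 (by rintro _ ⟨j, rfl⟩; exact hbuv i j))
  exact hu0.2 (by rintro _ ⟨i, rfl⟩; exact hbu i)

theorem OrderConvergesTo.add {f g : ℕ → E} (hf : OrderConvergesTo f 0)
    (hg : OrderConvergesTo g 0) : OrderConvergesTo (f + g) 0 := by
  obtain ⟨u, hu, hu0, hfu⟩ := hf
  obtain ⟨v, hv, hv0, hgv⟩ := hg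
  refine ⟨u + v, hu.add hv, isGLB_range_add hu hv hu0 hv0, fun m => ?_⟩
  obtain ⟨N₁, h₁⟩ := hfu m
  obtain ⟨N₂, h₂⟩ := hgv m
  refine ⟨max N₁ N₂, fun n hn => ?_⟩
  simp only [sub_zero, Pi.add_apply] at h₁ h₂ ⊢
  exact (abs_add_le _ _).trans
    (add_le_add (h₁ n (le_of_max_le_left hn)) (h₂ n (le_of_max_le_right hn)))

theorem OrderConvergesTo.nsmul {f : ℕ → E} (hf : OrderConvergesTo f 0) (k : ℕ) :
    OrderConvergesTo (k • f) 0 := by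
  induction k with
  | zero => simpa using orderConvergesTo_zero
  | succ k ih => simpa [succ_nsmul] using ih.add hf

theorem OrderConvergesTo.sum {ι : Type*} (s : Finset ι) {f : ι → ℕ → E}
    (h : ∀ i ∈ s, OrderConvergesTo (f i) 0) : OrderConvergesTo (∑ i ∈ s, f i) 0 := by
  classical
  induction s using Finset.induction with
  | empty => simpa using orderConvergesTo_zero
  | insert i s hi ih =>
    rw [sum_insert hi]
    exact (h i (mem_insert_self i s)).add (ih fun j hj => h j (mem_insert_of_mem hj))

variable [Module ℝ E] [PosSMulMono ℝ E]

theorem OrderConvergesTo.const_smul {f : ℕ → E} (hf : OrderConvergesTo f 0) {c : ℝ}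
    (hc : 0 ≤ c) : OrderConvergesTo (c • f) 0 :=
  (hf.abs.nsmul ⌈c⌉₊).of_abs_le fun n =>
    (abs_smul_le_smul_abs hc (f n)).trans <| (smul_le_smul_of_nonneg_right (Nat.le_ceil c)
      (abs_nonneg (f n))).trans_eq (Nat.cast_smul_eq_nsmul ℝ _ _)

/-- The tail suprema of `f` decrease to an element below `ε • W` for every `ε > 0`, hence
to `0`. -/
theorem orderConvergesTo_zero_of_forall_le_add_smul {f : ℕ → E} {W : E} (hf : ∀ n, 0 ≤ f n)
    (h : ∀ ε : ℝ, 0 < ε → ∃ g : ℕ → E, OrderConvergesTo g 0 ∧ ∀ n, f n ≤ g n + ε • W) :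
    OrderConvergesTo f 0 := by
  obtain ⟨g, ⟨u, -, -, hgu⟩, hfg⟩ := h 1 one_pos
  obtain ⟨N, hN⟩ := hgu 0
  have hbdd : ∀ j, BddAbove (f '' Set.Ici (N + j)) := fun j => ⟨u 0 + (1 : ℝ) • W, by
    rintro _ ⟨n, hn, rfl⟩
    exact (hfg n).trans (add_le_add_left ((le_abs_self _).trans
      (by simpa using hN n (le_of_add_le_left hn))) _)⟩
  set t : ℕ → E := fun j => sSup (f '' Set.Ici (N + j))
  have hft : ∀ j n, N + j ≤ n → f n ≤ t j := fun j n hn => le_csSup (hbdd j) ⟨n, hn, rfl⟩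
  have ht : ∀ j, 0 ≤ t j := fun j => (hf _).trans (hft j _ le_rfl)
  refine ⟨t, fun i j hij => csSup_le_csSup (hbdd i) ⟨_, N + j, Set.mem_Ici.2 le_rfl, rfl⟩
    (Set.image_mono (Set.Ici_subset_Ici.2 (by omega))), ⟨?_, fun b hb => ?_⟩,
    fun j => ⟨N + j, fun n hn => by simpa [abs_of_nonneg (hf n)] using hft j n hn⟩⟩
  · rintro _ ⟨j, rfl⟩
    exact ht j
  refine (le_sup_left : b ≤ b ⊔ 0).trans (nonpos_of_forall_le_smul (W := W) fun ε hε => ?_)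
  obtain ⟨g', ⟨v, -, hv0, hg'v⟩, hfg'⟩ := h ε hε
  refine sub_nonpos.1 (hv0.2 ?_)
  rintro _ ⟨i, rfl⟩
  obtain ⟨M, hM⟩ := hg'v i
  have htM : t M ≤ v i + ε • W := csSup_le ⟨_, N + M, Set.mem_Ici.2 le_rfl, rfl⟩ <| by
    rintro _ ⟨n, hn, rfl⟩
    exact (hfg' n).trans (add_le_add_left ((le_abs_self _).trans
      (by simpa using hM n (le_of_add_le_right hn))) _)
  exact sub_le_iff_le_add.2 ((sup_le (hb ⟨M, rfl⟩) (ht M)).trans htM)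

end OrderConvergence

section Cesaro

variable {E : Type*} [AddCommGroup E] [Module ℝ E]

noncomputable def cesaro : (ℕ → E) →ₗ[ℝ] ℕ → E where
  toFun a n := (n : ℝ)⁻¹ • ∑ k ∈ range n, a k
  map_add' a b := by ext n; simp [sum_add_distrib]
  map_smul' c a := by ext n; simp [smul_sum, smul_comm c]

theorem cesaro_apply (a : ℕ → E) (n : ℕ) : cesaro a n = (n : ℝ)⁻¹ • ∑ k ∈ range n, a k := rfl

variable [PartialOrder E] [IsOrderedAddMonoid E] [PosSMulMono ℝ E]

theorem cesaro_mono {a b : ℕ → E} (h : ∀ k, a k ≤ b k) (n : ℕ) : cesaro a n ≤ cesaro b n :=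
  smul_le_smul_of_nonneg_left (sum_le_sum fun k _ => h k) (by positivity)

theorem cesaro_nonneg {a : ℕ → E} (h : ∀ k, 0 ≤ a k) (n : ℕ) : 0 ≤ cesaro a n :=
  smul_nonneg (by positivity) (sum_nonneg fun k _ => h k)

theorem cesaro_const_le {c : E} (hc : 0 ≤ c) (n : ℕ) : cesaro (fun _ => c) n ≤ c := by
  rw [cesaro_apply, sum_const, card_range, ← Nat.cast_smul_eq_nsmul ℝ, smul_smul]
  refine smul_le_of_le_one_left hc ?_
  rcases n.eq_zero_or_pos with rfl | hn
  · simp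
  · rw [inv_mul_cancel₀ (by positivity)]

end Cesaro

namespace PreCEPS

variable {E : Type*} [ConditionallyCompleteLattice E] [AddCommGroup E] [Module ℝ E]
  (A : PreCEPS E)

theorem mul_e (x : E) : A.mul x A.e = x := by rw [A.mul_comm', A.one_mul']

theorem mul_smul_e (c : ℝ) (x : E) : A.mul (c • A.e) x = c • x := by
  rw [map_smul, LinearMap.smul_apply, A.one_mul']

theorem mul_eq_zero_of_inf_eq_zero {x y : E} (hx : 0 ≤ x) (hy : 0 ≤ y) (h : x ⊓ y = 0) :
    A.mul x y = 0 := by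
  have h₁ : y ⊓ A.mul x y = 0 := by rw [inf_comm]; exact A.finf' x y y h hy
  simpa [A.mul_comm' y x] using A.finf' y (A.mul x y) x h₁ hx

theorem pow_S_e (k : ℕ) : (A.S ^ k) A.e = A.e := by
  rw [Module.End.coe_pow]
  exact Function.iterate_fixed A.S_e k

theorem S_monotone : Monotone A.S := fun x y h => by
  rw [← sup_eq_right.2 h, A.S_sup]
  exact le_sup_left

theorem pow_S_monotone (k : ℕ) : Monotone (A.S ^ k) := by
  rw [Module.End.coe_pow]
  exact A.S_monotone.iterate k

theorem mul_sub_smul_e (f q : E) (c : ℝ) : A.mul (f - c • A.e) q = A.mul f q - c • q := by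
  rw [map_sub, LinearMap.sub_apply, A.mul_smul_e]

noncomputable def correlation (k : ℕ) : E →ₗ[ℝ] E →ₗ[ℝ] E :=
  (A.mul ∘ₗ A.S ^ k).compr₂ A.T - A.mul.compl₁₂ A.T A.T

theorem correlation_apply (k : ℕ) (x y : E) :
    A.correlation k x y = A.T (A.mul ((A.S ^ k) x) y) - A.mul (A.T x) (A.T y) := rfl

/-- As `c` varies, these components of `e` form the spectral system of `f` in Freudenthal's
spectral theorem. -/
noncomputable def spectralProj (f : E) (c : ℝ) : E := bandProj (f - c • A.e)⁺ A.e

variable [CovariantClass E E (· + ·) (· ≤ ·)]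

theorem mul_self_nonneg (x : E) : 0 ≤ A.mul x x := by
  have h : A.mul x⁺ x⁻ = 0 := A.mul_eq_zero_of_inf_eq_zero (posPart_nonneg x) (negPart_nonneg x)
    (posPart_inf_negPart_eq_zero x)
  have hx : A.mul x x = A.mul x⁺ x⁺ + A.mul x⁻ x⁻ := by
    conv_lhs => rw [← posPart_sub_negPart x]
    simp only [map_sub, LinearMap.sub_apply, h, A.mul_comm' x⁻ x⁺]
    abel
  rw [hx]
  exact add_nonneg (A.mul_pos' _ _ (posPart_nonneg x) (posPart_nonneg x))
    (A.mul_pos' _ _ (negPart_nonneg x) (negPart_nonneg x))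

/-- The order of `E` is not assumed to be compatible with scalars; it is, because
`r • e = (√r • e)·(√r • e)` is a square and `r • x = (r • e)·x`. -/
theorem posSMulMono (A : PreCEPS E) : PosSMulMono ℝ E := .of_smul_nonneg fun r hr x hx => by
  have hre : 0 ≤ r • A.e := by
    simpa [A.one_mul', smul_smul, Real.mul_self_sqrt hr] using
      A.mul_self_nonneg (√r • A.e)
  simpa [A.one_mul'] using A.mul_pos' _ _ hre hx

theorem nonneg_of_le_smul_e {x : E} {a : ℝ} (hx : 0 ≤ x) (h : x ≤ a • A.e) : 0 ≤ a := by
  have := A.posSMulMono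
  by_contra! ha
  have hae : a • A.e ≤ 0 := by
    simpa [neg_smul] using smul_nonneg (neg_nonneg.2 ha.le) A.e_pos.le
  exact A.e_pos.ne' ((smul_eq_zero.1 (le_antisymm hae (hx.trans h))).resolve_left ha.ne)

theorem mul_le_mul_of_nonneg_left {x y z : E} (h : y ≤ z) (hx : 0 ≤ x) :
    A.mul x y ≤ A.mul x z := by
  simpa using A.mul_pos' x (z - y) hx (sub_nonneg.2 h)

theorem mul_le_mul_of_nonneg_right {x y z : E} (h : y ≤ z) (hx : 0 ≤ x) :
    A.mul y x ≤ A.mul z x := by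
  simpa [A.mul_comm' _ x] using A.mul_le_mul_of_nonneg_left h hx

theorem abs_mul_le (x y : E) : |A.mul x y| ≤ A.mul |x| |y| := by
  have h := A.mul.abs_apply₂_le_posPart_negPart x y
  simp only [abs_of_nonneg (A.mul_pos' _ _ (posPart_nonneg _) (posPart_nonneg _)),
    abs_of_nonneg (A.mul_pos' _ _ (posPart_nonneg _) (negPart_nonneg _)),
    abs_of_nonneg (A.mul_pos' _ _ (negPart_nonneg _) (posPart_nonneg _)),
    abs_of_nonneg (A.mul_pos' _ _ (negPart_nonneg _) (negPart_nonneg _))] at h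
  rw [← posPart_add_negPart x, ← posPart_add_negPart y]
  simp only [map_add, LinearMap.add_apply]
  convert h using 1
  abel

theorem T_monotone : Monotone A.T :=
  (monotone_iff_map_nonneg A.T).2 A.T_pos

theorem isComponent_spectralProj (f : E) (c : ℝ) : IsComponent A.e (A.spectralProj f c) :=
  have := A.posSMulMono
  isComponent_bandProj (posPart_nonneg _) A.e_pos.le

theorem spectralProj_antitone (f : E) : Antitone (A.spectralProj f) := fun _ _ h =>
  have := A.posSMulMono
  bandProj_mono_left (posPart_mono (sub_le_sub_left
    (smul_le_smul_of_nonneg_right h A.e_pos.le) f)) A.e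

theorem spectralProj_eq_zero {f : E} {c : ℝ} (h : f ≤ c • A.e) : A.spectralProj f c = 0 := by
  rw [spectralProj, posPart_eq_zero.2 (sub_nonpos.2 h), bandProj_zero_left A.e_pos.le]

theorem mul_spectralProj_zero {f : E} (hf : 0 ≤ f) : A.mul f (A.spectralProj f 0) = f := by
  have := A.posSMulMono
  have hdisj : f ⊓ (A.e - A.spectralProj f 0) = 0 := by
    simpa [spectralProj, posPart_eq_self.2 hf, inf_comm] using sub_bandProj_inf_eq_zero hf A.e
  have h := A.mul_eq_zero_of_inf_eq_zero hf
    (sub_nonneg.2 (A.isComponent_spectralProj f 0).2.1) hdisj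
  rwa [map_sub, A.mul_e, sub_eq_zero, eq_comm] at h

theorem smul_le_mul_of_negPart_inf_eq_zero {f q : E} {c : ℝ} (hq : 0 ≤ q)
    (h : (f - c • A.e)⁻ ⊓ q = 0) : c • q ≤ A.mul f q := by
  have h' := A.mul_sub_smul_e f q c
  rw [← posPart_sub_negPart (f - c • A.e), map_sub, LinearMap.sub_apply,
    A.mul_eq_zero_of_inf_eq_zero (negPart_nonneg _) hq h, sub_zero] at h'
  exact sub_nonneg.1 (h' ▸ A.mul_pos' _ _ (posPart_nonneg _) hq)

theorem mul_le_smul_of_posPart_inf_eq_zero {f q : E} {c : ℝ} (hq : 0 ≤ q)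
    (h : (f - c • A.e)⁺ ⊓ q = 0) : A.mul f q ≤ c • q := by
  have h' := A.mul_sub_smul_e f q c
  rw [← posPart_sub_negPart (f - c • A.e), map_sub, LinearMap.sub_apply,
    A.mul_eq_zero_of_inf_eq_zero (posPart_nonneg _) hq h, zero_sub] at h'
  exact sub_nonpos.1 (h' ▸ neg_nonpos.2 (A.mul_pos' _ _ (negPart_nonneg _) hq))

theorem smul_le_mul_sub_spectralProj (f : E) {c c' : ℝ} (h : c ≤ c') :
    c • (A.spectralProj f c - A.spectralProj f c') ≤
      A.mul f (A.spectralProj f c - A.spectralProj f c') := by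
  have := A.posSMulMono
  have hq := sub_nonneg.2 (A.spectralProj_antitone f h)
  refine A.smul_le_mul_of_negPart_inf_eq_zero hq (inf_eq_zero_of_le (negPart_nonneg _) hq le_rfl
    (sub_le_self _ (A.isComponent_spectralProj f c').1) ?_)
  exact inf_bandProj_eq_zero (posPart_nonneg _) (negPart_nonneg _)
    (by rw [inf_comm]; exact posPart_inf_negPart_eq_zero _) A.e_pos.le

theorem mul_sub_spectralProj_le_smul (f : E) {c c' : ℝ} (h : c ≤ c') :
    A.mul f (A.spectralProj f c - A.spectralProj f c') ≤
      c' • (A.spectralProj f c - A.spectralProj f c') := by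
  have := A.posSMulMono
  have hq := sub_nonneg.2 (A.spectralProj_antitone f h)
  refine A.mul_le_smul_of_posPart_inf_eq_zero hq (inf_eq_zero_of_le (posPart_nonneg _) hq le_rfl
    (sub_le_sub_right (A.isComponent_spectralProj f c).2.1 _) ?_)
  rw [inf_comm]
  exact sub_bandProj_inf_eq_zero (posPart_nonneg _) A.e

/-- The witness is the lower step function `∑_{j < ⌈K/ε⌉} (j ε) • (P (j ε) - P ((j + 1) ε))`
of the spectral system `P = A.spectralProj f`. -/
theorem exists_sum_smul_components_approx {f : E} {K ε : ℝ} (hf : 0 ≤ f) (hK : f ≤ K • A.e)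
    (hε : 0 < ε) :
    ∃ (L : ℕ) (c : ℕ → ℝ) (q : ℕ → E), (∀ j, 0 ≤ c j) ∧ (∀ j, IsComponent A.e (q j)) ∧
      0 ≤ f - ∑ j ∈ range L, c j • q j ∧ f - ∑ j ∈ range L, c j • q j ≤ ε • A.e := by
  have := A.posSMulMono
  set P : ℕ → E := fun j => A.spectralProj f (j * ε)
  set L := ⌈K / ε⌉₊
  have hstep : ∀ j : ℕ, (j : ℝ) * ε ≤ ((j + 1 : ℕ) : ℝ) * ε := fun j => by
    gcongr
    simp
  have hPL : P L = 0 := A.spectralProj_eq_zero (hK.trans (smul_le_smul_of_nonneg_right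
    ((div_le_iff₀ hε).1 (Nat.le_ceil _)) A.e_pos.le))
  have hP0 : A.mul f (P 0) = f := by simpa [P] using A.mul_spectralProj_zero hf
  have hsum : f - ∑ j ∈ range L, ((j : ℝ) * ε) • (P j - P (j + 1)) =
      ∑ j ∈ range L, (A.mul f (P j - P (j + 1)) - ((j : ℝ) * ε) • (P j - P (j + 1))) := by
    rw [sum_sub_distrib, ← map_sum, sum_range_sub' P, hPL, sub_zero, hP0]
  refine ⟨L, fun j => j * ε, fun j => P j - P (j + 1), fun j => by positivity,
    fun j => (A.isComponent_spectralProj f _).sub (A.isComponent_spectralProj f _)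
      (A.spectralProj_antitone f (hstep j)), ?_, ?_⟩
  · rw [hsum]
    exact sum_nonneg fun j _ => sub_nonneg.2 (A.smul_le_mul_sub_spectralProj f (hstep j))
  · rw [hsum]
    calc _ ≤ ∑ j ∈ range L, ε • (P j - P (j + 1)) := sum_le_sum fun j _ => by
          rw [sub_le_iff_le_add, ← add_smul]
          refine (A.mul_sub_spectralProj_le_smul f (hstep j)).trans_eq ?_
          congr 1
          push_cast
          ring
      _ = ε • P 0 := by rw [← smul_sum, sum_range_sub' P, hPL, sub_zero]
      _ ≤ ε • A.e := smul_le_smul_of_nonneg_left (A.isComponent_spectralProj f _).2.1 hε.le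

theorem abs_correlation_le (k : ℕ) (x y : E) :
    |A.correlation k x y| ≤ A.T (A.mul ((A.S ^ k) |x|) |y|) + A.mul (A.T |x|) (A.T |y|) := by
  rw [correlation_apply]
  refine (abs_sub_le_abs_add_abs _ _).trans (add_le_add ?_ ?_)
  · refine (abs_apply_le_apply_abs A.T_monotone _).trans
      (A.T_monotone ((A.abs_mul_le _ _).trans ?_))
    exact A.mul_le_mul_of_nonneg_right (abs_apply_le_apply_abs (A.pow_S_monotone k) x)
      (abs_nonneg y)
  · exact (A.abs_mul_le _ _).trans ((A.mul_le_mul_of_nonneg_right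
      (abs_apply_le_apply_abs A.T_monotone x) (abs_nonneg _)).trans
      (A.mul_le_mul_of_nonneg_left (abs_apply_le_apply_abs A.T_monotone y)
        (A.T_pos _ (abs_nonneg x))))

theorem abs_correlation_le_smul {x y : E} {a b : ℝ} (hx : |x| ≤ a • A.e) (hy : |y| ≤ b • A.e)
    (k : ℕ) : |A.correlation k x y| ≤ (2 * (a * b)) • A.e := by
  have := A.posSMulMono
  have ha : 0 ≤ a := A.nonneg_of_le_smul_e (abs_nonneg x) hx
  have hTy : a • A.T |y| ≤ (a * b) • A.e := calc
    a • A.T |y| ≤ a • A.T (b • A.e) := smul_le_smul_of_nonneg_left (A.T_monotone hy) ha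
    _ = (a * b) • A.e := by rw [map_smul, A.T_e, mul_smul]
  have h₁ : A.mul ((A.S ^ k) |x|) |y| ≤ a • |y| := calc
    _ ≤ A.mul (a • A.e) |y| := A.mul_le_mul_of_nonneg_right
        ((A.pow_S_monotone k hx).trans_eq (by rw [map_smul, A.pow_S_e])) (abs_nonneg y)
    _ = a • |y| := A.mul_smul_e a |y|
  have h₂ : A.mul (A.T |x|) (A.T |y|) ≤ a • A.T |y| := calc
    _ ≤ A.mul (a • A.e) (A.T |y|) := A.mul_le_mul_of_nonneg_right
        ((A.T_monotone hx).trans_eq (by rw [map_smul, A.T_e])) (A.T_pos _ (abs_nonneg y))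
    _ = a • A.T |y| := A.mul_smul_e a _
  calc |A.correlation k x y| ≤ a • A.T |y| + a • A.T |y| :=
        (A.abs_correlation_le k x y).trans
          (add_le_add ((A.T_monotone h₁).trans_eq (map_smul _ _ _)) h₂)
    _ ≤ (a * b) • A.e + (a * b) • A.e := add_le_add hTy hTy
    _ = (2 * (a * b)) • A.e := by rw [two_mul, add_smul]

theorem abs_correlation_le_of_approx {f f' g g' : E} {a b ε : ℝ} (hf' : |f'| ≤ a • A.e)
    (hg : |g| ≤ b • A.e) (hff' : |f - f'| ≤ ε • A.e) (hgg' : |g - g'| ≤ ε • A.e) (k : ℕ) :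
    |A.correlation k f g| ≤ |A.correlation k f' g'| + ε • (2 * (a + b)) • A.e := by
  have hsplit : A.correlation k f g = A.correlation k f' g' + A.correlation k (f - f') g +
      A.correlation k f' (g - g') := by
    simp only [map_sub, LinearMap.sub_apply]
    abel
  rw [hsplit]
  calc _ ≤ |A.correlation k f' g'| + |A.correlation k (f - f') g| +
        |A.correlation k f' (g - g')| :=
        (abs_add_le _ _).trans (add_le_add (abs_add_le _ _) le_rfl)
    _ ≤ |A.correlation k f' g'| + (2 * (ε * b)) • A.e + (2 * (a * ε)) • A.e :=
        add_le_add (add_le_add le_rfl (A.abs_correlation_le_smul hff' hg k))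
          (A.abs_correlation_le_smul hf' hgg' k)
    _ = _ := by
        rw [add_assoc, ← add_smul, smul_smul]
        congr 2
        ring

end PreCEPS

namespace CEPS

variable {E : Type*} [ConditionallyCompleteLattice E] [AddCommGroup E] [Module ℝ E]
  [CovariantClass E E (· + ·) (· ≤ ·)] {A : CEPS E}

theorem WeakMixing.orderConvergesTo_cesaro_of_nonneg (hwm : A.WeakMixing) {f g : E} {a b : ℝ}
    (hf : 0 ≤ f) (hfa : f ≤ a • A.e) (hg : 0 ≤ g) (hgb : g ≤ b • A.e) :
    OrderConvergesTo (cesaro fun k => |A.correlation k f g|) 0 := by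
  have := A.posSMulMono
  have hW : 0 ≤ (2 * (a + b)) • A.e := smul_nonneg (by
    linarith [A.nonneg_of_le_smul_e hf hfa, A.nonneg_of_le_smul_e hg hgb]) A.e_pos.le
  refine orderConvergesTo_zero_of_forall_le_add_smul (W := (2 * (a + b)) • A.e)
    (cesaro_nonneg fun k => abs_nonneg _) fun ε hε => ?_
  obtain ⟨L, c, p, hc, hp, hfL, hfU⟩ := A.exists_sum_smul_components_approx hf hfa hε
  obtain ⟨M, d, q, hd, hq, hgL, hgU⟩ := A.exists_sum_smul_components_approx hg hgb hε
  have hf' : |∑ i ∈ range L, c i • p i| ≤ a • A.e := by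
    rw [abs_of_nonneg (sum_nonneg fun i _ => smul_nonneg (hc i) (hp i).1)]
    exact (sub_nonneg.1 hfL).trans hfa
  have hbound : ∀ k, |A.correlation k f g| ≤ (∑ i ∈ range L, ∑ j ∈ range M,
      (c i * d j) • |A.correlation k (p i) (q j)|) + ε • (2 * (a + b)) • A.e := fun k =>
    (A.abs_correlation_le_of_approx hf' (by rwa [abs_of_nonneg hg]) (by rwa [abs_of_nonneg hfL])
      (by rwa [abs_of_nonneg hgL]) k).trans
      (add_le_add ((A.correlation k).abs_apply₂_sum_smul_le _ _ hc hd p q) le_rfl)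
  refine ⟨∑ i ∈ range L, ∑ j ∈ range M,
      (c i * d j) • cesaro (fun k => |A.correlation k (p i) (q j)|),
    OrderConvergesTo.sum _ fun i _ => OrderConvergesTo.sum _ fun j _ =>
      (hwm _ _ (hp i) (hq j)).const_smul (mul_nonneg (hc i) (hd j)), fun n => ?_⟩
  calc cesaro (fun k => |A.correlation k f g|) n
      ≤ cesaro ((∑ i ∈ range L, ∑ j ∈ range M,
          (c i * d j) • fun k => |A.correlation k (p i) (q j)|) +
            fun _ => ε • (2 * (a + b)) • A.e) n :=
        cesaro_mono (fun k => by simpa using hbound k) n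
    _ ≤ _ := by
        simp only [map_add, map_sum, map_smul, Pi.add_apply]
        exact add_le_add le_rfl (cesaro_const_le (smul_nonneg hε.le hW) n)

theorem WeakMixing.orderConvergesTo_cesaro_of_abs_le (hwm : A.WeakMixing) {f g : E} {a b : ℝ}
    (hf : |f| ≤ a • A.e) (hg : |g| ≤ b • A.e) :
    OrderConvergesTo (cesaro fun k => |A.correlation k f g|) 0 := by
  have := A.posSMulMono
  have hfp := (posPart_le_abs f).trans hf
  have hfn := (negPart_le_abs f).trans hf
  have hgp := (posPart_le_abs g).trans hg
  have hgn := (negPart_le_abs g).trans hg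
  have h := (((hwm.orderConvergesTo_cesaro_of_nonneg (posPart_nonneg f) hfp
      (posPart_nonneg g) hgp).add
    (hwm.orderConvergesTo_cesaro_of_nonneg (negPart_nonneg f) hfn (posPart_nonneg g) hgp)).add
    (hwm.orderConvergesTo_cesaro_of_nonneg (posPart_nonneg f) hfp (negPart_nonneg g) hgn)).add
    (hwm.orderConvergesTo_cesaro_of_nonneg (negPart_nonneg f) hfn (negPart_nonneg g) hgn)
  simp only [← map_add] at h
  refine h.of_abs_le fun n => ?_
  rw [abs_of_nonneg (cesaro_nonneg (fun k => abs_nonneg _) n)]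
  exact cesaro_mono (fun k => (A.correlation k).abs_apply₂_le_posPart_negPart f g) n

end CEPS

/-- a conditional expectation preserving system is conditionally weak
mixing iff `(1/n)·∑_{k<n} |T((S^k f)·g) − Tf·Tg| → 0` in order for all `f, g` in the
ideal `E_e` generated by `e`. -/
theorem weakMixing_iff_ideal
    {E : Type*} [ConditionallyCompleteLattice E] [AddCommGroup E] [Module ℝ E]
    [CovariantClass E E (· + ·) (· ≤ ·)]
    (A : CEPS E) :
    A.WeakMixing ↔
      ∀ f g : E, (∃ k : ℝ, |f| ≤ k • A.e) → (∃ k : ℝ, |g| ≤ k • A.e) →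
        OrderConvergesTo
          (fun n => (n : ℝ)⁻¹ • ∑ k ∈ Finset.range n,
            |A.T (A.mul ((A.S ^ k) f) g) - A.mul (A.T f) (A.T g)|) (0 : E) := by
  have hcomp : ∀ {p : E}, IsComponent A.e p → ∃ k : ℝ, |p| ≤ k • A.e := fun hp =>
    ⟨1, by rw [one_smul, abs_of_nonneg hp.1]; exact hp.2.1⟩
  exact ⟨fun hwm f g ⟨a, hf⟩ ⟨b, hg⟩ => hwm.orderConvergesTo_cesaro_of_abs_le hf hg,
    fun h p q hp hq => h p q (hcomp hp) (hcomp hq)⟩
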